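/- Fix $g \geq 1$ and let $E \subset (\mathbb{Z}/2\mathbb{Z})^g \times (\mathbb{Z}/2\mathbb{Z})^g$ be the set of even pairs ($b_1 \cdot b_2 = 0$). Suppose $(x_b)_{b \in E}$ are rational numbers such that for every even pair $a$, $\sum_{b \in E} (-1)^{\langle a, b\rangle} x_b = 0$, where $\langle (a_1,a_2),(b_1,b_2)\rangle = a_1\cdot b_2 + a_2\cdot b_1$. Then $x_b = 0$ for all $b \in E$. -/

import Mathlib

open Finset

def dot {g : ℕ} (a b : Fin g → ZMod 2) : ZMod 2 := ∑ i, a i * b i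

def sgn (x : ZMod 2) : ℚ := (-1 : ℚ) ^ x.val

def pair {g : ℕ} (v w : (Fin g → ZMod 2) × (Fin g → ZMod 2)) : ZMod 2 :=
  dot v.1 w.2 + dot v.2 w.1

def EvenPair (g : ℕ) : Type :=
  { p : (Fin g → ZMod 2) × (Fin g → ZMod 2) // dot p.1 p.2 = 0 }

instance (g : ℕ) : Fintype (EvenPair g) := by unfold EvenPair; infer_instance

/-!
Let `M` be the matrix `(sgn ⟨a, b⟩)` indexed by even pairs. Writing the indicator of even pairs
as `(1 + sgn (a₁ ⬝ a₂)) / 2`, an entry of `M²` splits into a character sum over all of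
`(ℤ/2ℤ)^{2g}`, equal to `4^g` on the diagonal and `0` off it, and a twisted Gauss sum equal to
`2^g sgn ⟨c, b⟩`. Hence `2 M² = 4^g I + 2^g M`, so `M x = 0` forces `4^g x = 0`.
-/

open Matrix

lemma sgn_zero : sgn 0 = 1 := rfl

lemma sgn_one : sgn 1 = -1 := by simp [sgn, ZMod.val_one]

lemma sgn_add (u v : ZMod 2) : sgn (u + v) = sgn u * sgn v := by
  rw [sgn, sgn, sgn, ZMod.val_add, ← neg_one_pow_eq_pow_mod_two, pow_add]

lemma one_add_sgn (u : ZMod 2) : 1 + sgn u = if u = 0 then 2 else 0 := by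
  obtain rfl | rfl : u = 0 ∨ u = 1 := by decide +revert
  · norm_num [sgn_zero]
  · norm_num [sgn_one]

section Dot

variable {g : ℕ}

lemma dot_eq_dotProduct (a b : Fin g → ZMod 2) : dot a b = a ⬝ᵥ b := rfl

lemma dot_comm (a b : Fin g → ZMod 2) : dot a b = dot b a := dotProduct_comm a b

lemma dot_add_left (a b c : Fin g → ZMod 2) : dot (a + b) c = dot a c + dot b c :=
  add_dotProduct a b c

lemma dot_add_right (a b c : Fin g → ZMod 2) : dot a (b + c) = dot a b + dot a c :=
  dotProduct_add a b c

lemma sum_sgn_dot (w : Fin g → ZMod 2) :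
    ∑ a : Fin g → ZMod 2, sgn (dot a w) = if w = 0 then 2 ^ g else 0 := by
  split_ifs with hw
  · simp [hw, dot, sgn_zero, card_univ]
  obtain ⟨i, hi⟩ : ∃ i, w i ≠ 0 := Function.ne_iff.mp hw
  have hwi : w i = 1 := Fin.eq_one_of_ne_zero _ hi
  have hflip (a : Fin g → ZMod 2) : sgn (dot (Pi.single i 1 + a) w) = -sgn (dot a w) := by
    rw [dot_add_left, sgn_add, dot_eq_dotProduct, single_dotProduct, hwi, one_mul, sgn_one,
      neg_one_mul]
  have hsum :=
    Equiv.sum_comp (Equiv.addLeft (Pi.single i 1 : Fin g → ZMod 2)) (fun a => sgn (dot a w))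
  simp only [Equiv.coe_addLeft, hflip, sum_neg_distrib] at hsum
  linarith

end Dot

abbrev PairSpace (g : ℕ) : Type := (Fin g → ZMod 2) × (Fin g → ZMod 2)

section Pair

variable {g : ℕ}

lemma pair_symm (v w : PairSpace g) : pair v w = pair w v := by
  rw [pair, pair, dot_comm v.1, dot_comm v.2, add_comm]

lemma pair_add_right (a u v : PairSpace g) : pair a (u + v) = pair a u + pair a v := by
  simp only [pair, Prod.fst_add, Prod.snd_add, dot_add_right]
  ring

lemma dot_add_fst_snd (u v : PairSpace g) :
    dot (u + v).1 (u + v).2 = dot u.1 u.2 + dot v.1 v.2 + pair u v := by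
  simp only [pair, Prod.fst_add, Prod.snd_add, dot_add_left, dot_add_right, dot_comm v.1 u.2]
  ring

lemma sum_sgn_pair (v : PairSpace g) :
    ∑ a : PairSpace g, sgn (pair a v) = if v = 0 then 4 ^ g else 0 := by
  simp only [Fintype.sum_prod_type, pair, sgn_add, ← sum_mul_sum, sum_sgn_dot,
    Prod.ext_iff, Prod.fst_zero, Prod.snd_zero]
  split_ifs <;> simp_all [show (4 : ℚ) = 2 * 2 by norm_num, mul_pow]

lemma sum_sgn_dot_fst_snd : ∑ a : PairSpace g, sgn (dot a.1 a.2) = 2 ^ g := by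
  simp only [Fintype.sum_prod_type_right, sum_sgn_dot]
  simp

lemma sum_sgn_pair_mul_sgn_dot (v : PairSpace g) :
    ∑ a : PairSpace g, sgn (dot a.1 a.2) * sgn (pair a v) = sgn (dot v.1 v.2) * 2 ^ g := by
  have hshift (a : PairSpace g) :
      dot (a + v).1 (a + v).2 + pair (a + v) v = dot a.1 a.2 + dot v.1 v.2 := by
    have hvv : pair v v = dot v.1 v.2 + dot v.1 v.2 := by rw [pair, dot_comm v.2]
    rw [dot_add_fst_snd, pair_symm a v, pair_symm (a + v), pair_add_right, hvv]
    have h2 : (2 : ZMod 2) = 0 := rfl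
    linear_combination (pair v a + dot v.1 v.2) * h2
  rw [← sum_sgn_dot_fst_snd, mul_sum, ← Equiv.sum_comp (Equiv.addRight v)]
  simp only [Equiv.coe_addRight, ← sgn_add, hshift, add_comm (dot v.1 v.2)]

end Pair

lemma sum_evenPair_eq {g : ℕ} (f : PairSpace g → ℚ) :
    ∑ a : EvenPair g, f a.1 = (∑ a, f a + ∑ a, sgn (dot a.1 a.2) * f a) / 2 := by
  rw [← sum_add_distrib, sum_div]
  have hsub : ∑ a ∈ univ.filter (fun p : PairSpace g => dot p.1 p.2 = 0), f a
      = ∑ a : EvenPair g, f a.1 := sum_subtype _ (by simp) f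
  rw [← hsub, sum_filter]
  refine sum_congr rfl fun a _ => ?_
  rw [← one_add_mul, one_add_sgn]
  split_ifs <;> ring

instance (g : ℕ) : DecidableEq (EvenPair g) := by unfold EvenPair; infer_instance

-- The matrix `M` of the paper.
def sgnMatrix (g : ℕ) : Matrix (EvenPair g) (EvenPair g) ℚ :=
  of fun a b => sgn (pair a.1 b.1)

lemma sgnMatrix_mul_self (g : ℕ) :
    (2 : ℚ) • (sgnMatrix g * sgnMatrix g) =
      (4 : ℚ) ^ g • 1 + (2 : ℚ) ^ g • sgnMatrix g := by
  ext c b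
  have hentry :
      (sgnMatrix g * sgnMatrix g) c b = ∑ a : EvenPair g, sgn (pair a.1 (c.1 + b.1)) := by
    simp only [mul_apply, sgnMatrix, of_apply, pair_add_right, sgn_add,
      pair_symm c.1]
  have hdot : dot (c.1 + b.1).1 (c.1 + b.1).2 = pair c.1 b.1 := by
    rw [dot_add_fst_snd, c.2, b.2, zero_add, zero_add]
  have hzero : c.1 + b.1 = 0 ↔ c = b := by
    rw [add_eq_zero_iff_eq_neg, ZModModule.neg_eq_self]
    exact ⟨fun h => Subtype.ext h, congrArg Subtype.val⟩
  rw [Matrix.smul_apply, hentry, sum_evenPair_eq fun a => sgn (pair a (c.1 + b.1)), sum_sgn_pair,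
    sum_sgn_pair_mul_sgn_dot, hdot, if_congr hzero rfl rfl]
  simp only [Matrix.add_apply, Matrix.smul_apply, Matrix.one_apply, sgnMatrix, of_apply]
  split_ifs <;> simp <;> ring

theorem stmt_13_general (g : ℕ) (x : EvenPair g → ℚ)
    (hx : ∀ a : EvenPair g, ∑ b : EvenPair g, sgn (pair a.1 b.1) * x b = 0) :
    ∀ b : EvenPair g, x b = 0 := by
  have hMx : sgnMatrix g *ᵥ x = 0 := funext hx
  have h4x : (4 : ℚ) ^ g • x = 0 := by
    have := congrArg (· *ᵥ x) (sgnMatrix_mul_self g)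
    simpa [smul_mulVec, add_mulVec, ← mulVec_mulVec, hMx] using this.symm
  intro b
  simpa using congrFun h4x b

theorem stmt_13 (g : ℕ) (hg : 1 ≤ g) (x : EvenPair g → ℚ)
    (hx : ∀ a : EvenPair g, ∑ b : EvenPair g, sgn (pair a.1 b.1) * x b = 0) :
    ∀ b : EvenPair g, x b = 0 :=
  stmt_13_general g x hx
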